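/- Let τ₁ denote the Schreier covering number and let m ∈ ℕ. Then for a finite set A of positive integers, τ₁(A) = m if and only if there exists a Schreier chain {F₁ < ⋯ < F_m} with A = F₁ ∪ ⋯ ∪ F_m such that F₁, …, F_{m−1} are maximal Schreier sets (F_m need not be maximal). -/

import Mathlib

open Finset Filter

/-- A Schreier set: a finite set of naturals whose cardinality is at most its minimum
(elements are automatically positive when nonempty). -/
def IsSchreier (F : Finset ℕ) : Prop := ∀ h : F.Nonempty, F.card ≤ F.min' h

/-- A maximal Schreier set: nonempty with cardinality equal to its minimum. -/
def IsMaxSchreier (F : Finset ℕ) : Prop := ∃ h : F.Nonempty, F.card = F.min' h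

/-- A (possibly empty) list of nonempty successive Schreier sets. -/
def SchreierChainList (C : List (Finset ℕ)) : Prop :=
  (∀ F ∈ C, IsSchreier F ∧ F.Nonempty) ∧
  C.Chain' (fun F G => ∀ a ∈ F, ∀ b ∈ G, a < b)

/-- A Schreier chain: a nonempty finite list of nonempty successive Schreier sets. -/
def IsSchreierChain (C : List (Finset ℕ)) : Prop := C ≠ [] ∧ SchreierChainList C

def chainUnion (C : List (Finset ℕ)) : Finset ℕ := C.foldr (· ∪ ·) ∅

noncomputable def mu (p : ℝ) (x : ℕ → ℝ) (F : Finset ℕ) : ℝ :=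
  (∑ n ∈ F, |x n| ^ p) ^ (1 / p)

/-- The p-th Schreier norm of a (finitely supported) sequence. -/
noncomputable def schreierNorm (p : ℝ) (x : ℕ → ℝ) : ℝ :=
  sSup {r | ∃ F : Finset ℕ, IsSchreier F ∧ F.Nonempty ∧ r = mu p x F}

noncomputable def betaNorm (p : ℝ) (x : ℕ → ℝ) (C : List (Finset ℕ)) : ℝ :=
  ((C.map fun F => (∑ n ∈ F, |x n|) ^ p).sum) ^ (1 / p)

/-- The p-th Baernstein norm of a (finitely supported) sequence. -/
noncomputable def baernsteinNorm (p : ℝ) (x : ℕ → ℝ) : ℝ :=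
  sSup {r | ∃ C : List (Finset ℕ), IsSchreierChain C ∧ r = betaNorm p x C}

/-- The Schreier covering number of a finite set. -/
noncomputable def tau1 (A : Finset ℕ) : ℕ :=
  sInf {m | ∃ C : List (Finset ℕ), SchreierChainList C ∧ C.length = m ∧ A ⊆ chainUnion C}

/-- Increasing enumeration of a set of naturals (0-indexed). -/
noncomputable def enumSet (M : Set ℕ) : ℕ → ℕ := Nat.nth (· ∈ M)

/-- `M(J)`: the image of an index set `J` under the increasing enumeration of `M`. -/
noncomputable def subImage (M : Set ℕ) (J : Finset ℕ) : Finset ℕ := J.image (enumSet M)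

/-- The Gasparis–Leung index `ΓL₁(M, N) ∈ ℕ ∪ {∞}`. -/
noncomputable def GLindex (M N : Set ℕ) : ℕ∞ :=
  ⨆ J ∈ {J : Finset ℕ | IsSchreier (subImage N J)}, (tau1 (subImage M J) : ℕ∞)

/-!
Cover `A` greedily: the first set takes the `min A` smallest elements of `A` (a maximal
Schreier set), and the rest of `A` is covered recursively. Such a greedy cover is optimal:
the first set `G` of any Schreier chain covering `A` meets `A` in an initial segment of `A`
with at most `|G| ≤ min G ≤ min A` elements, so it covers no more of `A` than the greedy first
set, and induction finishes the argument. Conversely, every chain as in the statement is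
greedy, hence has length `τ₁(A)`.
-/

namespace Finset

variable {α : Type*} [LinearOrder α]

theorem exists_initialSegment_card_eq (A : Finset α) {k : ℕ} (hk : k ≤ A.card) :
    ∃ F ⊆ A, F.card = k ∧ ∀ x ∈ F, ∀ y ∈ A \ F, x < y := by
  induction A using Finset.induction_on_max generalizing k with
  | empty => exact ⟨∅, subset_rfl, (by simpa using hk : k = 0).symm, by simp⟩
  | insert M s hlt ih =>
    rw [card_insert_of_notMem fun hM => (hlt M hM).false] at hk
    rcases hk.lt_or_eq with hk | rfl
    · obtain ⟨F, hFs, hcard, hseg⟩ := ih (Nat.le_of_lt_succ hk)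
      refine ⟨F, hFs.trans (subset_insert M s), hcard, fun x hx y hy => ?_⟩
      obtain ⟨rfl | hys, hyF⟩ := by simpa only [mem_sdiff, mem_insert] using hy
      · exact hlt x (hFs hx)
      · exact hseg x hx y (mem_sdiff.2 ⟨hys, hyF⟩)
    · refine ⟨insert M s, subset_rfl, ?_, by simp⟩
      exact card_insert_of_notMem fun hM => (hlt M hM).false

theorem min'_eq_of_initialSegment {A F : Finset α} (hFA : F ⊆ A) (hF : F.Nonempty)
    (hseg : ∀ x ∈ F, ∀ y ∈ A \ F, x < y) : F.min' hF = A.min' (hF.mono hFA) := by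
  refine le_antisymm (min'_le _ _ ?_) (min'_subset hF hFA)
  by_contra hmin
  exact (min'_le A _ (hFA (F.min'_mem hF))).not_gt
    (hseg _ (F.min'_mem hF) _ (mem_sdiff.2 ⟨A.min'_mem _, hmin⟩))

end Finset

lemma chainUnion_cons (F : Finset ℕ) (C : List (Finset ℕ)) :
    chainUnion (F :: C) = F ∪ chainUnion C := rfl

lemma mem_chainUnion {C : List (Finset ℕ)} {x : ℕ} : x ∈ chainUnion C ↔ ∃ F ∈ C, x ∈ F := by
  induction C with
  | nil => simp [chainUnion]
  | cons F C ih => simp [chainUnion_cons, ih]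

lemma IsMaxSchreier.isSchreier {F : Finset ℕ} (hF : IsMaxSchreier F) : IsSchreier F :=
  fun _ => hF.2.le

lemma SchreierChainList.of_cons {F : Finset ℕ} {C : List (Finset ℕ)}
    (h : SchreierChainList (F :: C)) : SchreierChainList C :=
  ⟨fun G hG => h.1 G (List.mem_cons_of_mem F hG), h.2.tail⟩

lemma SchreierChainList.lt_of_mem_chainUnion {F : Finset ℕ} {C : List (Finset ℕ)}
    (h : SchreierChainList (F :: C)) : ∀ x ∈ F, ∀ y ∈ chainUnion C, x < y := by
  induction C generalizing F with
  | nil => simp [chainUnion]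
  | cons G C ih =>
    have hFG := (List.isChain_cons_cons.1 h.2).1
    obtain ⟨g, hg⟩ := (h.of_cons.1 G List.mem_cons_self).2
    intro x hx y hy
    rcases mem_union.1 hy with hy | hy
    · exact hFG x hx y hy
    · exact (hFG x hx g hg).trans (ih h.of_cons g hg y hy)

lemma schreierChainList_cons {F : Finset ℕ} {C : List (Finset ℕ)} :
    SchreierChainList (F :: C) ↔
      IsSchreier F ∧ F.Nonempty ∧ (∀ x ∈ F, ∀ y ∈ chainUnion C, x < y) ∧ SchreierChainList C := by
  constructor
  · intro h
    exact ⟨(h.1 F List.mem_cons_self).1, (h.1 F List.mem_cons_self).2, h.lt_of_mem_chainUnion,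
      h.of_cons⟩
  · rintro ⟨hS, hne, hsep, hC⟩
    refine ⟨?_, List.isChain_cons.2 ⟨?_, hC.2⟩⟩
    · rintro G (_ | ⟨_, hG⟩)
      exacts [⟨hS, hne⟩, hC.1 G hG]
    · intro G hG x hx y hy
      exact hsep x hx y (mem_chainUnion.2 ⟨G, List.mem_of_mem_head? hG, hy⟩)

def IsGreedyCover (A : Finset ℕ) (C : List (Finset ℕ)) : Prop :=
  SchreierChainList C ∧ chainUnion C = A ∧
    ∀ (i : ℕ) (hi : i + 1 < C.length), IsMaxSchreier (C.get ⟨i, Nat.lt_of_succ_lt hi⟩)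

namespace IsGreedyCover

variable {A F : Finset ℕ} {C : List (Finset ℕ)}

lemma nil : IsGreedyCover ∅ [] :=
  ⟨⟨by simp, List.isChain_nil⟩, rfl, by simp⟩

lemma singleton (hS : IsSchreier A) (hne : A.Nonempty) : IsGreedyCover A [A] :=
  ⟨schreierChainList_cons.2 ⟨hS, hne, by simp [chainUnion], nil.1⟩, by simp [chainUnion], by simp⟩

lemma cons {B : Finset ℕ} (hC : IsGreedyCover B C) (hF : IsMaxSchreier F)
    (hFB : ∀ x ∈ F, ∀ y ∈ B, x < y) : IsGreedyCover (F ∪ B) (F :: C) := by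
  obtain ⟨hchain, rfl, hmax⟩ := hC
  refine ⟨schreierChainList_cons.2 ⟨hF.isSchreier, hF.1, hFB, hchain⟩, rfl, ?_⟩
  rintro (_ | i) hi
  exacts [hF, hmax i (Nat.lt_of_succ_lt_succ hi)]

lemma isMaxSchreier_head {G : Finset ℕ} (h : IsGreedyCover A (F :: G :: C)) : IsMaxSchreier F :=
  h.2.2 0 (by simp)

lemma chainUnion_tail (h : IsGreedyCover A (F :: C)) : chainUnion C = A \ F := by
  rw [← h.2.1, chainUnion_cons, union_sdiff_cancel_left]
  exact disjoint_left.2 fun x hxF hxC => (h.1.lt_of_mem_chainUnion x hxF x hxC).false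

lemma tail (h : IsGreedyCover A (F :: C)) : IsGreedyCover (A \ F) C :=
  ⟨h.1.of_cons, h.chainUnion_tail, fun i hi => h.2.2 (i + 1) (Nat.succ_lt_succ hi)⟩

end IsGreedyCover

lemma sdiff_subset_chainUnion_tail {A F G : Finset ℕ} {D : List (Finset ℕ)}
    (hF : IsMaxSchreier F) (hFA : F ⊆ A) (hseg : ∀ x ∈ F, ∀ y ∈ A \ F, x < y)
    (hD : SchreierChainList (G :: D)) (hAD : A ⊆ chainUnion (G :: D)) :
    A \ F ⊆ chainUnion D := by
  intro x hx
  -- if `x ∈ G`, then `insert x F ⊆ G`, while `|G| ≤ min G ≤ min F = |F|`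
  refine (mem_union.1 (hAD (mem_sdiff.1 hx).1)).resolve_left fun hxG => ?_
  obtain ⟨hGS, -, hGD, -⟩ := schreierChainList_cons.1 hD
  have hFG : F ⊆ G := fun f hf => (mem_union.1 (hAD (hFA hf))).resolve_right
    fun hfD => (hseg f hf x hx).asymm (hGD x hxG f hfD)
  obtain ⟨hFne, hFcard⟩ := hF
  have hcard := card_le_card (insert_subset hxG hFG)
  rw [card_insert_of_notMem (mem_sdiff.1 hx).2] at hcard
  have := hGS ⟨x, hxG⟩
  have := min'_subset hFne hFG
  omega

lemma IsGreedyCover.length_le {A : Finset ℕ} {C D : List (Finset ℕ)} (hC : IsGreedyCover A C)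
    (hD : SchreierChainList D) (hAD : A ⊆ chainUnion D) : C.length ≤ D.length := by
  induction C generalizing A D with
  | nil => exact Nat.zero_le _
  | cons F C ih =>
    obtain _ | ⟨G, D⟩ := D
    · obtain ⟨x, hx⟩ := (hC.1.1 F List.mem_cons_self).2
      simpa [chainUnion] using hAD (hC.2.1.subset (mem_union_left _ hx))
    obtain _ | ⟨F', C'⟩ := C
    · simp
    have hFA : F ⊆ A := subset_union_left.trans hC.2.1.subset
    have hseg : ∀ x ∈ F, ∀ y ∈ A \ F, x < y :=
      hC.chainUnion_tail ▸ hC.1.lt_of_mem_chainUnion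
    exact Nat.succ_le_succ <| ih hC.tail hD.of_cons
      (sdiff_subset_chainUnion_tail hC.isMaxSchreier_head hFA hseg hD hAD)

lemma IsGreedyCover.tau1_eq {A : Finset ℕ} {C : List (Finset ℕ)} (hC : IsGreedyCover A C) :
    tau1 A = C.length :=
  IsLeast.csInf_eq ⟨⟨C, hC.1, rfl, hC.2.1.ge⟩,
    by rintro _ ⟨D, hD, rfl, hAD⟩; exact hC.length_le hD hAD⟩

lemma exists_isGreedyCover {A : Finset ℕ} (hA : ∀ a ∈ A, 0 < a) : ∃ C, IsGreedyCover A C := by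
  induction A using Finset.strongInduction with
  | H A ih =>
  rcases A.eq_empty_or_nonempty with rfl | hne
  · exact ⟨[], IsGreedyCover.nil⟩
  by_cases hcard : A.card ≤ A.min' hne
  · exact ⟨[A], IsGreedyCover.singleton (fun _ => hcard) hne⟩
  obtain ⟨F, hFA, hFcard, hseg⟩ := A.exists_initialSegment_card_eq (k := A.min' hne) (by omega)
  have hFne : F.Nonempty := card_pos.1 (hFcard ▸ hA _ (A.min'_mem hne))
  have hFmax : IsMaxSchreier F :=
    ⟨hFne, hFcard.trans (min'_eq_of_initialSegment hFA hFne hseg).symm⟩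
  obtain ⟨C, hC⟩ := ih (A \ F) (sdiff_ssubset hFA hFne) fun a ha => hA a (mem_sdiff.1 ha).1
  exact ⟨F :: C, union_sdiff_of_subset hFA ▸ hC.cons hFmax hseg⟩

theorem tau1_eq_iff_general (A : Finset ℕ) (hA : ∀ a ∈ A, 0 < a) (m : ℕ) :
    tau1 A = m ↔
      ∃ C : List (Finset ℕ), SchreierChainList C ∧ C.length = m ∧ chainUnion C = A ∧
        ∀ (i : ℕ) (hi : i + 1 < C.length),
          IsMaxSchreier (C.get ⟨i, Nat.lt_of_succ_lt hi⟩) := by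
  constructor
  · rintro rfl
    obtain ⟨C, hC⟩ := exists_isGreedyCover hA
    exact ⟨C, hC.1, hC.tau1_eq.symm, hC.2⟩
  · rintro ⟨C, hchain, rfl, hunion, hmax⟩
    exact IsGreedyCover.tau1_eq ⟨hchain, hunion, hmax⟩

/-- Characterization of the Schreier covering number: τ₁(A) = m iff A is the union of a
Schreier chain of length m whose first m-1 sets are maximal. -/
theorem tau1_eq_iff (A : Finset ℕ) (hA : ∀ a ∈ A, 0 < a) (m : ℕ) (hm : 1 ≤ m) :
    tau1 A = m ↔
      ∃ C : List (Finset ℕ), SchreierChainList C ∧ C.length = m ∧ chainUnion C = A ∧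
        ∀ (i : ℕ) (hi : i + 1 < C.length),
          IsMaxSchreier (C.get ⟨i, Nat.lt_of_succ_lt hi⟩) :=
  tau1_eq_iff_general A hA m
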